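/- Let ρ : G̃ → G be as in the covering setup, with kernel K contained in the center of G̃, and let l ≥ 1. If x̃ = (ã₁,b̃₁,…,ã_l,b̃_l,c̃) and ỹ = (ã'₁,b̃'₁,…,ã'_l,b̃'_l,c̃') are elements of G̃^{2l+1} whose componentwise images under ρ agree and whose common image x satisfies ν_G^l(x) = e, then ν_{G̃}^l(x̃) and ν_{G̃}^l(ỹ) both lie in K and have the same image in K/2K; moreover this common class in K/2K is unchanged if x is replaced by its simultaneous conjugate by any g ∈ G. Hence the obstruction map o₂ : (ν_G^l)⁻¹(e) → K/2K is well defined and descends to the conjugation quotient. -/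

import Mathlib

/-!
Two lifts of the same point of `G^{2l+1}` differ componentwise by elements of the kernel,
which is central. Central factors drop out of every commutator, while the last coordinate
enters `ν` squared, so the two values of `ν` differ by the square of a kernel element. A
conjugation by `g ∈ G` lifts to conjugation by a preimage `g̃ ∈ G̃`, which fixes the central
element `ν(x̃)`.
-/

open scoped commutatorElement in
/-- The commutator map `μ_H^l : H^{2l} → H`,
`(a₁,b₁,…,a_l,b_l) ↦ a₁b₁a₁⁻¹b₁⁻¹ ⋯ a_l b_l a_l⁻¹ b_l⁻¹`, where the `2l`-tuple is
encoded as an `l`-tuple of pairs `(aᵢ, bᵢ)`. -/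
def commutatorMap {H : Type*} [Group H] {l : ℕ} (x : Fin l → H × H) : H :=
  (List.ofFn fun i => ⁅(x i).1, (x i).2⁆).prod

/-- The map `ν_H^l : H^{2l+1} → H`, `(a₁,b₁,…,a_l,b_l,c) ↦ μ_H^l(a₁,…,b_l)·c²`. -/
def nuMap {H : Type*} [Group H] {l : ℕ} (x : (Fin l → H × H) × H) : H :=
  commutatorMap x.1 * x.2 ^ 2

open scoped commutatorElement

section

variable {H H' F : Type*} [Group H] [Group H'] [FunLike F H H'] [MonoidHomClass F H H'] {l : ℕ}

theorem map_commutatorMap (φ : F) (x : Fin l → H × H) :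
    φ (commutatorMap x) = commutatorMap fun i => (φ (x i).1, φ (x i).2) := by
  simp only [commutatorMap, map_list_prod, List.map_ofFn, Function.comp_def,
    map_commutatorElement]

theorem map_nuMap (φ : F) (x : (Fin l → H × H) × H) :
    φ (nuMap x) = nuMap ((fun i => (φ (x.1 i).1, φ (x.1 i).2)), φ x.2) := by
  simp only [nuMap, map_mul, map_pow, map_commutatorMap]

theorem commutatorElement_mul_left_of_mem_center (a b : H) {k : H}
    (hk : k ∈ Subgroup.center H) : ⁅a * k, b⁆ = ⁅a, b⁆ := by
  rw [commutatorElement_mul_left_eq_conj_mul,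
    commutatorElement_eq_one_iff_commute.mpr (Subgroup.mem_center_iff.mp hk b).symm,
    mul_one, mul_inv_cancel, one_mul]

theorem commutatorElement_mul_right_of_mem_center (a b : H) {k : H}
    (hk : k ∈ Subgroup.center H) : ⁅a, b * k⁆ = ⁅a, b⁆ := by
  rw [← commutatorElement_inv, commutatorElement_mul_left_of_mem_center _ _ hk,
    commutatorElement_inv]

theorem exists_mem_ker_eq_mul_of_map_eq (ρ : H →* H') {a a' : H} (h : ρ a = ρ a') :
    ∃ k ∈ ρ.ker, a' = a * k :=
  ⟨a⁻¹ * a', (ρ.eq_iff).mp h.symm, (mul_inv_cancel_left a a').symm⟩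

theorem commutatorElement_eq_of_map_eq {ρ : H →* H'} (hker : ρ.ker ≤ Subgroup.center H)
    {a b a' b' : H} (ha : ρ a = ρ a') (hb : ρ b = ρ b') : ⁅a, b⁆ = ⁅a', b'⁆ := by
  obtain ⟨k, hk, rfl⟩ := exists_mem_ker_eq_mul_of_map_eq ρ ha
  obtain ⟨k', hk', rfl⟩ := exists_mem_ker_eq_mul_of_map_eq ρ hb
  rw [commutatorElement_mul_left_of_mem_center _ _ (hker hk),
    commutatorElement_mul_right_of_mem_center _ _ (hker hk')]

theorem commutatorMap_eq_of_map_eq {ρ : H →* H'} (hker : ρ.ker ≤ Subgroup.center H)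
    {x y : Fin l → H × H} (h : ∀ i, ρ (x i).1 = ρ (y i).1 ∧ ρ (x i).2 = ρ (y i).2) :
    commutatorMap x = commutatorMap y := by
  unfold commutatorMap
  congr 2
  funext i
  exact commutatorElement_eq_of_map_eq hker (h i).1 (h i).2

theorem exists_nuMap_eq_mul_sq_of_map_eq {ρ : H →* H'} (hker : ρ.ker ≤ Subgroup.center H)
    {x y : (Fin l → H × H) × H}
    (h₁ : ∀ i, ρ (x.1 i).1 = ρ (y.1 i).1 ∧ ρ (x.1 i).2 = ρ (y.1 i).2)
    (h₂ : ρ x.2 = ρ y.2) :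
    ∃ k ∈ ρ.ker, nuMap x = nuMap y * k ^ 2 := by
  obtain ⟨k, hk, hyx⟩ := exists_mem_ker_eq_mul_of_map_eq ρ h₂.symm
  refine ⟨k, hk, ?_⟩
  have hcomm : Commute y.2 k := Subgroup.mem_center_iff.mp (hker hk) y.2
  rw [nuMap, nuMap, commutatorMap_eq_of_map_eq hker h₁, hyx, hcomm.mul_pow, mul_assoc]

theorem exists_nuMap_eq_mul_sq_of_map_eq_conj {ρ : H →* H'} (hker : ρ.ker ≤ Subgroup.center H)
    (hρ : Function.Surjective ρ) {x z : (Fin l → H × H) × H}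
    (hx : nuMap x ∈ Subgroup.center H) (g : H')
    (h₁ : ∀ i, ρ (z.1 i).1 = g * ρ (x.1 i).1 * g⁻¹ ∧ ρ (z.1 i).2 = g * ρ (x.1 i).2 * g⁻¹)
    (h₂ : ρ z.2 = g * ρ x.2 * g⁻¹) :
    ∃ k ∈ ρ.ker, nuMap z = nuMap x * k ^ 2 := by
  obtain ⟨g', rfl⟩ := hρ g
  have hρconj (a : H) : ρ (MulAut.conj g' a) = ρ g' * ρ a * (ρ g')⁻¹ := by
    simp only [MulAut.conj_apply, map_mul, map_inv]
  have hfix : MulAut.conj g' (nuMap x) = nuMap x := by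
    rw [MulAut.conj_apply, Subgroup.mem_center_iff.mp hx g', mul_inv_cancel_right]
  rw [← hfix, map_nuMap]
  exact exists_nuMap_eq_mul_sq_of_map_eq hker
    (fun i => by simp only [hρconj, h₁ i, and_self]) (by rw [hρconj, h₂])

end

theorem obstruction_map_well_defined_odd_nonorientable_general
    (Gt : Type*) [Group Gt]
    (G : Type*) [Group G]
    (ρ : Gt →* G) (hρsurj : Function.Surjective ρ)
    (hker : MonoidHom.ker ρ ≤ Subgroup.center Gt)
    (l : ℕ)
    (xt yt : (Fin l → Gt × Gt) × Gt)
    (hxy : (∀ i, ρ (xt.1 i).1 = ρ (yt.1 i).1 ∧ ρ (xt.1 i).2 = ρ (yt.1 i).2) ∧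
      ρ xt.2 = ρ yt.2)
    (hx : nuMap ((fun i => (ρ (xt.1 i).1, ρ (xt.1 i).2)), ρ xt.2) = 1) :
    nuMap xt ∈ MonoidHom.ker ρ ∧ nuMap yt ∈ MonoidHom.ker ρ ∧
      (∃ k ∈ MonoidHom.ker ρ, nuMap xt = nuMap yt * k ^ 2) ∧
      ∀ (g : G) (zt : (Fin l → Gt × Gt) × Gt),
        ((∀ i, ρ (zt.1 i).1 = g * ρ (xt.1 i).1 * g⁻¹ ∧
            ρ (zt.1 i).2 = g * ρ (xt.1 i).2 * g⁻¹) ∧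
          ρ zt.2 = g * ρ xt.2 * g⁻¹) →
        ∃ k ∈ MonoidHom.ker ρ, nuMap zt = nuMap xt * k ^ 2 := by
  have hxK : nuMap xt ∈ ρ.ker := by rw [MonoidHom.mem_ker, map_nuMap, hx]
  obtain ⟨k, hk, hxyk⟩ := exists_nuMap_eq_mul_sq_of_map_eq hker hxy.1 hxy.2
  have hyK : nuMap yt ∈ ρ.ker :=
    (Subgroup.mul_mem_cancel_right _ (pow_mem hk 2)).mp (hxyk ▸ hxK)
  exact ⟨hxK, hyK, ⟨k, hk, hxyk⟩, fun g zt ⟨hz₁, hz₂⟩ =>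
    exists_nuMap_eq_mul_sq_of_map_eq_conj hker hρsurj (hker hxK) g hz₁ hz₂⟩

/-- in the universal covering setup `ρ : G̃ → G` with central discrete
kernel `K`, if `xt, yt ∈ G̃^{2l+1}` have the same componentwise image `x` under `ρ` and
`ν_G^l(x) = e`, then `ν_{G̃}^l(xt)` and `ν_{G̃}^l(yt)` lie in `K` and differ by a square
of an element of `K` (i.e. have the same class in `K/2K`); moreover this class is
unchanged under simultaneous conjugation of `x` by any `g ∈ G`.  Hence the obstruction
map `o₂ : (ν_G^l)⁻¹(e) → K/2K` is well defined and descends to the conjugation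
quotient. -/
theorem obstruction_map_well_defined_odd_nonorientable
    {E₁ : Type*} [NormedAddCommGroup E₁] [NormedSpace ℝ E₁]
    {H₁ : Type*} [TopologicalSpace H₁] (I₁ : ModelWithCorners ℝ E₁ H₁)
    (Gt : Type*) [TopologicalSpace Gt] [ChartedSpace H₁ Gt] [Group Gt]
    [IsTopologicalGroup Gt] [LieGroup I₁ (⊤ : ℕ∞) Gt]
    [CompactSpace Gt] [ConnectedSpace Gt] [SimplyConnectedSpace Gt]
    [LieAlgebra.IsSemisimple ℝ (LeftInvariantDerivation I₁ Gt)]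
    {E₂ : Type*} [NormedAddCommGroup E₂] [NormedSpace ℝ E₂]
    {H₂ : Type*} [TopologicalSpace H₂] (I₂ : ModelWithCorners ℝ E₂ H₂)
    (G : Type*) [TopologicalSpace G] [ChartedSpace H₂ G] [Group G]
    [IsTopologicalGroup G] [LieGroup I₂ (⊤ : ℕ∞) G]
    [CompactSpace G] [ConnectedSpace G]
    [LieAlgebra.IsSemisimple ℝ (LeftInvariantDerivation I₂ G)]
    (ρ : Gt →* G) (hρcont : Continuous ρ) (hρsurj : Function.Surjective ρ)
    [DiscreteTopology ↥(MonoidHom.ker ρ)]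
    (hker : MonoidHom.ker ρ ≤ Subgroup.center Gt)
    (l : ℕ) (hl : 1 ≤ l)
    (xt yt : (Fin l → Gt × Gt) × Gt)
    (hxy : (∀ i, ρ (xt.1 i).1 = ρ (yt.1 i).1 ∧ ρ (xt.1 i).2 = ρ (yt.1 i).2) ∧
      ρ xt.2 = ρ yt.2)
    (hx : nuMap ((fun i => (ρ (xt.1 i).1, ρ (xt.1 i).2)), ρ xt.2) = 1) :
    nuMap xt ∈ MonoidHom.ker ρ ∧ nuMap yt ∈ MonoidHom.ker ρ ∧
      (∃ k ∈ MonoidHom.ker ρ, nuMap xt = nuMap yt * k ^ 2) ∧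
      ∀ (g : G) (zt : (Fin l → Gt × Gt) × Gt),
        ((∀ i, ρ (zt.1 i).1 = g * ρ (xt.1 i).1 * g⁻¹ ∧
            ρ (zt.1 i).2 = g * ρ (xt.1 i).2 * g⁻¹) ∧
          ρ zt.2 = g * ρ xt.2 * g⁻¹) →
        ∃ k ∈ MonoidHom.ker ρ, nuMap zt = nuMap xt * k ^ 2 :=
  obstruction_map_well_defined_odd_nonorientable_general Gt G ρ hρsurj hker l xt yt hxy hx
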